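/- The matrices L = [[1,1],[0,1]] and R = [[1,0],[1,1]] generate a free monoid: distinct positive words in L and R give distinct matrices in SL₂(ℤ). -/
import Mathlib


open Matrix

/-- Evaluation of a positive word in the letters `L = !![1,1;0,1]` (encoded `false`)
and `R = !![1,0;1,1]` (encoded `true`) as a matrix in `SL₂(ℤ)`. -/
def LRprod (w : List Bool) : Matrix (Fin 2) (Fin 2) ℤ :=
  (w.map (fun b => if b then !![1, 0; 1, 1] else !![1, 1; 0, 1])).prod

lemma LRprod_nil : LRprod [] = 1 := by simp [LRprod]

lemma LRprod_cons (b : Bool) (t : List Bool) :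
    LRprod (b :: t) = (if b then !![1, 0; 1, 1] else !![1, 1; 0, 1]) * LRprod t := by
  simp [LRprod]

lemma LRprod_rowsums (w : List Bool) :
    1 ≤ LRprod w 0 0 + LRprod w 0 1 ∧ 1 ≤ LRprod w 1 0 + LRprod w 1 1 := by
  induction w with
  | nil => simp [LRprod_nil]
  | cons b t ih =>
    obtain ⟨h0, h1⟩ := ih
    cases b <;>
      (simp only [LRprod_cons, if_true, if_false, Matrix.mul_apply, Fin.sum_univ_two]
       simp [Matrix.cons_val_zero, Matrix.cons_val_one]
       constructor <;> linarith)

/-- the "sign" quantity: row0 sum minus row1 sum -/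
def Sgn (w : List Bool) : ℤ :=
  (LRprod w 0 0 + LRprod w 0 1) - (LRprod w 1 0 + LRprod w 1 1)

lemma Sgn_nil : Sgn [] = 0 := by simp [Sgn, LRprod_nil]

lemma Sgn_false (t : List Bool) : 0 < Sgn (false :: t) := by
  have h := LRprod_rowsums t
  simp only [Sgn, LRprod_cons, if_false, Matrix.mul_apply, Fin.sum_univ_two]
  simp [Matrix.cons_val_zero, Matrix.cons_val_one]
  linarith [h.1, h.2]

lemma Sgn_true (t : List Bool) : Sgn (true :: t) < 0 := by
  have h := LRprod_rowsums t
  simp only [Sgn, LRprod_cons, if_true, Matrix.mul_apply, Fin.sum_univ_two]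
  simp [Matrix.cons_val_zero, Matrix.cons_val_one]
  linarith [h.1, h.2]

lemma L_inv : !![(1:ℤ), -1; 0, 1] * !![1, 1; 0, 1] = 1 := by
  ext i j; fin_cases i <;> fin_cases j <;> simp [Matrix.mul_apply, Fin.sum_univ_two]

lemma R_inv : !![(1:ℤ), 0; -1, 1] * !![1, 0; 1, 1] = 1 := by
  ext i j; fin_cases i <;> fin_cases j <;> simp [Matrix.mul_apply, Fin.sum_univ_two]

lemma Sgn_ne_zero (b : Bool) (t : List Bool) : Sgn (b :: t) ≠ 0 := by
  cases b
  · have := Sgn_false t; omega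
  · have := Sgn_true t; omega

theorem LR_free_monoid (w₁ w₂ : List Bool) (h₁ : w₁ ≠ []) (h₂ : w₂ ≠ [])
    (h : LRprod w₁ = LRprod w₂) : w₁ = w₂ := by
  induction w₁ generalizing w₂ with
  | nil => exact absurd rfl h₁
  | cons b₁ t₁ ih =>
    obtain ⟨b₂, t₂, rfl⟩ : ∃ b t, w₂ = b :: t := by
      cases w₂ with
      | nil => exact absurd rfl h₂
      | cons b t => exact ⟨b, t, rfl⟩
    have hs : Sgn (b₁ :: t₁) = Sgn (b₂ :: t₂) := by simp [Sgn, h]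
    have hb : b₁ = b₂ := by
      cases b₁ <;> cases b₂ <;> first
        | rfl
        | (exfalso; have := Sgn_false t₁; have := Sgn_true t₂; omega)
        | (exfalso; have := Sgn_true t₁; have := Sgn_false t₂; omega)
    subst hb
    have ht : LRprod t₁ = LRprod t₂ := by
      rw [LRprod_cons, LRprod_cons] at h
      cases b₁ with
      | false =>
        simp only [if_false, Bool.false_eq_true] at h
        have e : LRprod t₁ = !![(1:ℤ), -1; 0, 1] * (!![1, 1; 0, 1] * LRprod t₁) := by
          rw [← Matrix.mul_assoc, L_inv, Matrix.one_mul]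
        rw [e, h, ← Matrix.mul_assoc, L_inv, Matrix.one_mul]
      | true =>
        simp only [if_true] at h
        have e : LRprod t₁ = !![(1:ℤ), 0; -1, 1] * (!![1, 0; 1, 1] * LRprod t₁) := by
          rw [← Matrix.mul_assoc, R_inv, Matrix.one_mul]
        rw [e, h, ← Matrix.mul_assoc, R_inv, Matrix.one_mul]
    have : t₁ = t₂ := by
      cases t₁ with
      | nil =>
        cases t₂ with
        | nil => rfl
        | cons b t =>
          exfalso
          apply Sgn_ne_zero b t
          simp [Sgn, ← ht, LRprod_nil, Matrix.one_apply]
      | cons b t =>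
        cases t₂ with
        | nil =>
          exfalso
          apply Sgn_ne_zero b t
          simp [Sgn, ht, LRprod_nil, Matrix.one_apply]
        | cons b' t' =>
          exact ih (b' :: t') (by simp) (by simp) ht
    rw [this]
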